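/- Let P be a Poisson algebra over a field 𝔽 and let I be a Lie ideal of P. Then {I², P} ⊆ I, i.e. for all x₁, x₂ ∈ I and x₃ ∈ P one has {x₁·x₂, x₃} ∈ I. -/

import Mathlib

/-- A Poisson bracket on a commutative associative unital `F`-algebra `P`:
an `F`-bilinear, alternating bracket satisfying the Jacobi identity and the
Leibniz rule `{a·b, c} = a·{b,c} + b·{a,c}`. -/
structure PoissonBracket (F P : Type*) [Field F] [CommRing P] [Algebra F P] where
  bracket : P → P → P
  add_left : ∀ a b c : P, bracket (a + b) c = bracket a c + bracket b c
  smul_left : ∀ (r : F) (a b : P), bracket (r • a) b = r • bracket a b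
  add_right : ∀ a b c : P, bracket a (b + c) = bracket a b + bracket a c
  smul_right : ∀ (r : F) (a b : P), bracket a (r • b) = r • bracket a b
  alt : ∀ a : P, bracket a a = 0
  jacobi : ∀ a b c : P,
    bracket (bracket a b) c + bracket (bracket b c) a + bracket (bracket c a) b = 0
  leibniz : ∀ a b c : P, bracket (a * b) c = a * bracket b c + b * bracket a c

namespace PoissonBracket

variable {F P : Type*} [Field F] [CommRing P] [Algebra F P]

/-- `{A, B}`: the `F`-span of all brackets of elements of `A` with elements of `B`. -/
def lieSpan (pb : PoissonBracket F P) (A B : Submodule F P) : Submodule F P :=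
  Submodule.span F {z : P | ∃ a ∈ A, ∃ b ∈ B, z = pb.bracket a b}

/-- Upper derived series: `δ̃₀(P) = P`, `δ̃ₙ₊₁(P) = {δ̃ₙ(P), δ̃ₙ(P)}·P`. -/
def udelta (pb : PoissonBracket F P) : ℕ → Submodule F P
  | 0 => ⊤
  | n + 1 => pb.lieSpan (pb.udelta n) (pb.udelta n) * ⊤

/-- Derived series of a Lie ideal `I`: `δ₀(I) = I`, `δₙ₊₁(I) = {δₙ(I), δₙ(I)}`. -/
def dseries (pb : PoissonBracket F P) (I : Submodule F P) : ℕ → Submodule F P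
  | 0 => I
  | n + 1 => pb.lieSpan (pb.dseries I n) (pb.dseries I n)

/-- Lower central series of a Lie ideal `I`, indexed so that `lcs I 1 = γ₁(I) = I`
and `lcs I (n+1) = γₙ₊₁(I) = {γₙ(I), I}` for `n ≥ 1` (index `0` is a dummy equal to `I`). -/
def lcs (pb : PoissonBracket F P) (I : Submodule F P) : ℕ → Submodule F P
  | 0 => I
  | 1 => I
  | n + 2 => pb.lieSpan (pb.lcs I (n + 1)) I

/-- Upper Lie power series: `P⁽¹⁾ = P`, `P⁽ⁿ⁾ = {P⁽ⁿ⁻¹⁾, P}·P` for `n > 1`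
(index `0` is a dummy equal to `P`). -/
def ulps (pb : PoissonBracket F P) : ℕ → Submodule F P
  | 0 => ⊤
  | 1 => ⊤
  | n + 2 => pb.lieSpan (pb.ulps (n + 1)) ⊤ * ⊤

/-- A Poisson ideal: an ideal for the associative product which is also a Lie ideal. -/
def IsPoissonIdeal (pb : PoissonBracket F P) (I : Submodule F P) : Prop :=
  (∀ x ∈ I, ∀ p : P, p * x ∈ I) ∧ (∀ x ∈ I, ∀ p : P, pb.bracket x p ∈ I)

/-- The Poisson ideal generated by a set `S`: the smallest Poisson ideal containing `S`. -/
def poissonSpan (pb : PoissonBracket F P) (S : Set P) : Submodule F P :=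
  sInf {I : Submodule F P | pb.IsPoissonIdeal I ∧ S ⊆ I}

end PoissonBracket

open PoissonBracket

/-! Antisymmetry and the Leibniz rule rewrite `{xy, z}` as `{x, yz} + {y, xz}`; when `x, y ∈ I`
both terms lie in the Lie ideal `I`. -/

namespace PoissonBracket

variable {F P : Type*} [Field F] [CommRing P] [Algebra F P] (pb : PoissonBracket F P)

theorem bracket_antisymm (a b : P) : pb.bracket a b = -pb.bracket b a := by
  have h := pb.alt (a + b)
  rw [pb.add_left, pb.add_right, pb.add_right, pb.alt, pb.alt] at h
  linear_combination h

theorem bracket_mul_eq_bracket_mul_add_bracket_mul (x y z : P) :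
    pb.bracket (x * y) z = pb.bracket x (y * z) + pb.bracket y (x * z) := by
  rw [pb.bracket_antisymm x, pb.bracket_antisymm y, pb.leibniz, pb.leibniz, pb.leibniz,
    pb.bracket_antisymm z x, pb.bracket_antisymm z y, pb.bracket_antisymm y x]
  ring

theorem lieSpan_le_iff {A B I : Submodule F P} :
    pb.lieSpan A B ≤ I ↔ ∀ a ∈ A, ∀ b ∈ B, pb.bracket a b ∈ I := by
  refine Submodule.span_le.trans ⟨fun h a ha b hb => h ⟨a, ha, b, hb, rfl⟩, ?_⟩
  rintro h _ ⟨a, ha, b, hb, rfl⟩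
  exact h a ha b hb

variable {pb} {I : Submodule F P}

theorem bracket_mul_mem (hI : ∀ x ∈ I, ∀ p : P, pb.bracket x p ∈ I) {x y : P} (hx : x ∈ I)
    (hy : y ∈ I) (z : P) : pb.bracket (x * y) z ∈ I := by
  rw [bracket_mul_eq_bracket_mul_add_bracket_mul]
  exact I.add_mem (hI x hx _) (hI y hy _)

theorem bracket_mem_of_mem_mul (hI : ∀ x ∈ I, ∀ p : P, pb.bracket x p ∈ I) {a : P}
    (ha : a ∈ I * I) (z : P) : pb.bracket a z ∈ I := by
  induction ha using Submodule.mul_induction_on' with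
  | mem_mul_mem x hx y hy => exact bracket_mul_mem hI hx hy z
  | add u _ v _ hu hv => rw [pb.add_left]; exact I.add_mem hu hv

end PoissonBracket

/-- For a Lie ideal `I` of a Poisson algebra `P`, `{I², P} ⊆ I`. -/
theorem lieSpan_sq_top_le
    {F P : Type*} [Field F] [CommRing P] [Algebra F P]
    (pb : PoissonBracket F P) (I : Submodule F P)
    (hI : ∀ x ∈ I, ∀ p : P, pb.bracket x p ∈ I) :
    pb.lieSpan (I * I) ⊤ ≤ I :=
  pb.lieSpan_le_iff.2 fun _ ha z _ => bracket_mem_of_mem_mul hI ha z
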